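/- arXiv:2411.09941 — 2 statements merged into one kernel-verified Lean document; each statement's English description precedes it below -/
import Mathlib

section
/- Let u be a classical solution in C²(ℝⁿ) of −Δu + (−Δ)^s u + u = u^p in ℝⁿ with u ≥ 0 and u(x) → 0 as |x| → ∞. If u is nontrivial, then u > 0 everywhere in ℝⁿ. -/
/-!
At a zero `x₀` of `u ≥ 0`, `x₀` is a global minimum, so every directional second derivative of
`u` at `x₀` is nonnegative and `Δu(x₀) ≥ 0`. The integrand
`(u(x₀) - u(y)) / |x₀ - y|^{n+2s} = -u(y) / |x₀ - y|^{n+2s}` is nonpositive, so the truncated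
integrals decrease as the truncation radius shrinks, and they are strictly negative once the
excluded ball misses a point where `u > 0`; hence so is their limit. The decay makes `u`
bounded, so the truncated integrals are finite: the kernel is integrable away from `x₀` because
`n + 2s > n`. Hence `0 = u(x₀)^p = -Δu(x₀) + c (-Δ)^s u(x₀) < 0`.
-/

open MeasureTheory Filter Set
open scoped Topology

noncomputable section

/-- The classical Laplacian of `u` at `x`, as the trace of the second derivative. -/
def lapl (n : ℕ) (u : EuclideanSpace ℝ (Fin n) → ℝ) (x : EuclideanSpace ℝ (Fin n)) : ℝ :=
  ∑ i : Fin n,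
    fderiv ℝ (fun y => fderiv ℝ u y (EuclideanSpace.single i 1)) x (EuclideanSpace.single i 1)

/-- `L` is the value at `x` of the (un-normalized) fractional Laplacian of `u`, defined as the
principal value `P.V. ∫ (u(x) − u(y)) / |x − y|^{n+2s} dy`. -/
def IsFracLapAt (n : ℕ) (s : ℝ) (u : EuclideanSpace ℝ (Fin n) → ℝ)
    (x : EuclideanSpace ℝ (Fin n)) (L : ℝ) : Prop :=
  Filter.Tendsto
    (fun ε : ℝ => ∫ y in {y : EuclideanSpace ℝ (Fin n) | ε ≤ dist x y},
      (u x - u y) / dist x y ^ ((n : ℝ) + 2 * s))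
    (nhdsWithin 0 (Set.Ioi 0)) (nhds L)

theorem IsLocalMin.deriv_deriv_nonneg {f : ℝ → ℝ} {a : ℝ} (h : IsLocalMin f a)
    (hc : ContinuousAt f a) : 0 ≤ deriv (deriv f) a := by
  by_contra! hneg
  -- `f'' a < 0` would make `a` a local maximum as well, so `f` would be locally constant.
  have hconst : f =ᶠ[𝓝 a] fun _ => f a :=
    (h.and (isLocalMax_of_deriv_deriv_neg hneg h.deriv_eq_zero hc)).mono
      fun _ hx => le_antisymm hx.2 hx.1
  refine hneg.ne ?_
  rw [hconst.deriv.deriv_eq, deriv_const', deriv_const]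

theorem IsLocalMin.fderiv_fderiv_apply_nonneg {E : Type*} [NormedAddCommGroup E]
    [NormedSpace ℝ E] {u : E → ℝ} (hu : ContDiff ℝ 2 u) {a : E} (h : IsLocalMin u a) (v : E) :
    0 ≤ fderiv ℝ (fun y => fderiv ℝ u y v) a v := by
  have hline : Continuous fun t : ℝ => a + t • v := by fun_prop
  have hud : Differentiable ℝ u := hu.differentiable (by norm_num)
  have hu'd : Differentiable ℝ fun y => fderiv ℝ u y v :=
    fun y => ((hu.fderiv_right (m := 1) (by norm_num)).differentiable (by norm_num) y).clm_apply
      (differentiableAt_const v)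
  have hmin : IsLocalMin (fun t : ℝ => u (a + t • v)) 0 :=
    IsLocalMin.comp_continuous (g := fun t : ℝ => a + t • v) (by simpa using h)
      hline.continuousAt
  have hderiv : deriv (fun t : ℝ => u (a + t • v)) = fun t => fderiv ℝ u (a + t • v) v := by
    funext t
    exact ((hud _).hasFDerivAt.comp_hasDerivAt t
      (((hasDerivAt_id t).smul_const v).const_add a)).deriv.trans (by simp)
  have hsecond := hmin.deriv_deriv_nonneg (hud.continuous.comp hline).continuousAt
  rw [hderiv] at hsecond
  change 0 ≤ lineDeriv ℝ (fun y => fderiv ℝ u y v) a v at hsecond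
  rwa [(hu'd a).lineDeriv_eq_fderiv] at hsecond

theorem inv_rpow_le_mul_one_add_rpow_neg {d ε α : ℝ} (hε : 0 < ε) (hd : ε ≤ d) (hα : 0 ≤ α) :
    (d ^ α)⁻¹ ≤ (1 + ε⁻¹) ^ α * (1 + d) ^ (-α) := by
  have hd0 : 0 < d := hε.trans_le hd
  rw [Real.rpow_neg (by positivity), ← div_eq_mul_inv,
    ← Real.div_rpow (by positivity) (by positivity), ← Real.inv_rpow hd0.le]
  refine Real.rpow_le_rpow (inv_nonneg.2 hd0.le) ?_ hα
  rw [le_div_iff₀ (by positivity), mul_add, mul_one, inv_mul_cancel₀ hd0.ne']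
  linarith [inv_anti₀ hε hd]

theorem integrableOn_div_dist_rpow {E : Type*} [NormedAddCommGroup E] [NormedSpace ℝ E]
    [FiniteDimensional ℝ E] [MeasurableSpace E] [BorelSpace E] (μ : Measure E)
    [μ.IsAddHaarMeasure] {g : E → ℝ} (hg : AEMeasurable g μ) {M : ℝ} (hM : ∀ y, |g y| ≤ M)
    {α : ℝ} (hα : (Module.finrank ℝ E : ℝ) < α) (x : E) {ε : ℝ} (hε : 0 < ε) :
    IntegrableOn (fun y => g y / dist x y ^ α) {y | ε ≤ dist x y} μ := by
  have hα0 : 0 ≤ α := (Nat.cast_nonneg _).trans hα.le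
  have hmaj : Integrable (fun y => (1 + ‖y - x‖) ^ (-α)) μ :=
    (integrable_one_add_norm hα).comp_sub_right x
  have hmeas : AEMeasurable (fun y => g y / dist x y ^ α) μ :=
    hg.div (by fun_prop : Measurable fun y => dist x y ^ α).aemeasurable
  refine (hmaj.const_mul (M * (1 + ε⁻¹) ^ α)).integrableOn.mono'
    hmeas.aestronglyMeasurable.restrict ?_
  refine (ae_restrict_iff' (measurableSet_le measurable_const (by fun_prop))).2
    (Eventually.of_forall fun y (hy : ε ≤ dist x y) => ?_)
  rw [Real.norm_eq_abs, abs_div, abs_of_nonneg (Real.rpow_nonneg dist_nonneg α), div_eq_mul_inv,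
    ← dist_eq_norm', mul_assoc]
  exact mul_le_mul (hM y) (inv_rpow_le_mul_one_add_rpow_neg hε hy hα0) (by positivity)
    ((abs_nonneg _).trans (hM y))

theorem setIntegral_div_dist_rpow_pos {E : Type*} [PseudoMetricSpace E] [MeasurableSpace E]
    [OpensMeasurableSpace E] {μ : Measure E} [μ.IsOpenPosMeasure] {g : E → ℝ} (hg : Continuous g)
    (hg0 : 0 ≤ g) {x x₁ : E} (hx₁ : 0 < g x₁) {ε α : ℝ} (hε : 0 ≤ ε) (hεx₁ : ε < dist x x₁)
    (hint : IntegrableOn (fun y => g y / dist x y ^ α) {y | ε ≤ dist x y} μ) :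
    0 < ∫ y in {y | ε ≤ dist x y}, g y / dist x y ^ α ∂μ := by
  rw [setIntegral_pos_iff_support_of_nonneg_ae
    (Eventually.of_forall fun y => div_nonneg (hg0 y) (Real.rpow_nonneg dist_nonneg α)) hint]
  have hU : IsOpen ({y | 0 < g y} ∩ {y | ε < dist x y}) :=
    (isOpen_lt continuous_const hg).inter (isOpen_lt continuous_const (by fun_prop))
  refine (hU.measure_pos μ ⟨x₁, hx₁, hεx₁⟩).trans_le (measure_mono ?_)
  rintro y ⟨hgy : 0 < g y, hdy : ε < dist x y⟩
  exact ⟨(div_pos hgy (Real.rpow_pos_of_pos (hε.trans_lt hdy) α)).ne', hdy.le⟩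

theorem setIntegral_le_of_tendsto_setIntegral_dist_ge {E : Type*} [PseudoMetricSpace E]
    [MeasurableSpace E] {μ : Measure E} {f : E → ℝ} (hf : 0 ≤ f) {x : E} {L : ℝ}
    (hint : ∀ ε > 0, IntegrableOn f {y | ε ≤ dist x y} μ)
    (hL : Tendsto (fun ε => ∫ y in {y | ε ≤ dist x y}, f y ∂μ) (𝓝[>] 0) (𝓝 L))
    {ε₀ : ℝ} (hε₀ : 0 < ε₀) : ∫ y in {y | ε₀ ≤ dist x y}, f y ∂μ ≤ L := by
  refine ge_of_tendsto hL ?_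
  filter_upwards [Ioo_mem_nhdsGT hε₀] with ε hε
  exact setIntegral_mono_set (hint ε hε.1) (Eventually.of_forall fun y => hf y)
    (Eventually.of_forall fun y (hy : ε₀ ≤ dist x y) => hε.2.le.trans hy)

theorem lapl_nonneg_of_isLocalMin {n : ℕ} {u : EuclideanSpace ℝ (Fin n) → ℝ}
    (hu : ContDiff ℝ 2 u) {a : EuclideanSpace ℝ (Fin n)} (h : IsLocalMin u a) :
    0 ≤ lapl n u a :=
  Finset.sum_nonneg fun _ _ => h.fderiv_fderiv_apply_nonneg hu _

theorem IsFracLapAt.neg_of_eq_zero {n : ℕ} {s : ℝ} {u : EuclideanSpace ℝ (Fin n) → ℝ}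
    {x : EuclideanSpace ℝ (Fin n)} {L : ℝ} (h : IsFracLapAt n s u x L) (hs : 0 < s)
    (hu : Continuous u) (hu0 : 0 ≤ u) (hx : u x = 0) {M : ℝ} (hM : ∀ y, |u y| ≤ M)
    (hne : ∃ y, u y ≠ 0) : L < 0 := by
  obtain ⟨x₁, hx₁⟩ := hne
  have hx₁pos : 0 < u x₁ := (hu0 x₁).lt_of_ne' hx₁
  have hdist : 0 < dist x x₁ := dist_pos.2 fun hxx₁ => hx₁ (hxx₁ ▸ hx)
  have hα : (Module.finrank ℝ (EuclideanSpace ℝ (Fin n)) : ℝ) < n + 2 * s := by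
    rw [finrank_euclideanSpace_fin]
    linarith
  have hint := fun ε (hε : 0 < ε) =>
    integrableOn_div_dist_rpow volume hu.measurable.aemeasurable hM hα x hε
  have hL : Tendsto (fun ε => ∫ y in {y | ε ≤ dist x y}, u y / dist x y ^ ((n : ℝ) + 2 * s))
      (𝓝[>] 0) (𝓝 (-L)) := by
    simpa only [hx, zero_sub, neg_div, integral_neg, neg_neg] using h.neg
  linarith [setIntegral_div_dist_rpow_pos hu hu0 hx₁pos (half_pos hdist).le
      (half_lt_self hdist) (hint _ (half_pos hdist)),
    setIntegral_le_of_tendsto_setIntegral_dist_ge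
      (fun y => div_nonneg (hu0 y) (Real.rpow_nonneg dist_nonneg _)) hint hL (half_pos hdist)]

theorem classical_solution_positive_general (n : ℕ) (s p cns : ℝ)
    (hs : s ∈ Set.Ioo (0 : ℝ) 1) (hp : 1 < p) (hcns : 0 < cns)
    (u : EuclideanSpace ℝ (Fin n) → ℝ) (hu2 : ContDiff ℝ 2 u)
    (Lu : EuclideanSpace ℝ (Fin n) → ℝ)
    (hLu : ∀ x : EuclideanSpace ℝ (Fin n), IsFracLapAt n s u x (Lu x))
    (heq : ∀ x : EuclideanSpace ℝ (Fin n), -(lapl n u x) + cns * Lu x + u x = u x ^ p)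
    (hnonneg : ∀ x : EuclideanSpace ℝ (Fin n), 0 ≤ u x)
    (hnontriv : ∃ x : EuclideanSpace ℝ (Fin n), u x ≠ 0)
    (hdecay : Filter.Tendsto u (Filter.cocompact (EuclideanSpace ℝ (Fin n))) (nhds 0)) :
    ∀ x : EuclideanSpace ℝ (Fin n), 0 < u x := by
  intro x₀
  refine (hnonneg x₀).lt_of_ne' fun hx₀ => ?_
  obtain ⟨M, hM⟩ := isBounded_iff_forall_norm_le.1
    (ZeroAtInftyContinuousMap.mk ⟨u, hu2.continuous⟩ hdecay).isBounded_range
  have hLu_neg : Lu x₀ < 0 := (hLu x₀).neg_of_eq_zero hs.1 hu2.continuous hnonneg hx₀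
    (fun y => hM _ (mem_range_self y)) hnontriv
  have hlapl : 0 ≤ lapl n u x₀ :=
    lapl_nonneg_of_isLocalMin hu2 (Eventually.of_forall fun y => hx₀ ▸ hnonneg y)
  have heq₀ := heq x₀
  rw [hx₀, Real.zero_rpow (by linarith)] at heq₀
  nlinarith [mul_neg_of_pos_of_neg hcns hLu_neg]

/-- A nontrivial nonnegative classical solution of
`−Δu + (−Δ)ˢu + u = uᵖ` in `ℝⁿ` vanishing at infinity is strictly positive everywhere. -/
theorem classical_solution_positive (n : ℕ) (hn : 2 ≤ n) (s p cns : ℝ)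
    (hs : s ∈ Set.Ioo (0 : ℝ) 1) (hp : 1 < p) (hcns : 0 < cns)
    (u : EuclideanSpace ℝ (Fin n) → ℝ) (hu2 : ContDiff ℝ 2 u)
    (Lu : EuclideanSpace ℝ (Fin n) → ℝ)
    (hLu : ∀ x : EuclideanSpace ℝ (Fin n), IsFracLapAt n s u x (Lu x))
    (heq : ∀ x : EuclideanSpace ℝ (Fin n), -(lapl n u x) + cns * Lu x + u x = u x ^ p)
    (hnonneg : ∀ x : EuclideanSpace ℝ (Fin n), 0 ≤ u x)
    (hnontriv : ∃ x : EuclideanSpace ℝ (Fin n), u x ≠ 0)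
    (hdecay : Filter.Tendsto u (Filter.cocompact (EuclideanSpace ℝ (Fin n))) (nhds 0)) :
    ∀ x : EuclideanSpace ℝ (Fin n), 0 < u x :=
  classical_solution_positive_general n s p cns hs hp hcns u hu2 Lu hLu heq hnonneg hnontriv hdecay
end
end

section
/- If f, g ∈ L¹(ℝⁿ) are radially symmetric, nonnegative, and nonincreasing in r = |x|, then the convolution f ∗ g is radially symmetric and nonincreasing in r. -/
/-!
By the layer-cake formula applied to both factors,
`(f ∗ g)(x) = ∫∫_{s, t > 0} |(x - {f > s}) ∩ {g > t}| ds dt`.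
Superlevel sets of radially nonincreasing functions are, up to a null sphere, centred balls or
the whole space, so it suffices that `|B(x, r) ∩ B(0, s)|` is nonincreasing in `‖x‖`. A reflection
moves `x` onto the first axis, and slicing orthogonally to that axis reduces the claim to the
same statement for intervals on the line.
-/

open MeasureTheory Set Metric

theorem Real.volume_ball_inter_ball_zero_le {a b r s : ℝ} (ha : 0 ≤ a) (hab : a ≤ b) :
    volume (ball b r ∩ ball 0 s) ≤ volume (ball a r ∩ ball 0 s) := by
  simp only [Real.ball_eq_Ioo, Ioo_inter_Ioo, Real.volume_Ioo, zero_sub, zero_add]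
  refine ENNReal.ofReal_le_ofReal ?_
  rcases le_total (b + r) s with h1 | h1 <;> rcases le_total (a + r) s with h2 | h2 <;>
  rcases le_total (b - r) (-s) with h3 | h3 <;> rcases le_total (a - r) (-s) with h4 | h4 <;>
  simp only [max_eq_left, max_eq_right, min_eq_left, min_eq_right, *] <;> linarith

theorem volume_ball_inter_ball_zero_eq_of_norm_eq {E : Type*} [NormedAddCommGroup E]
    [InnerProductSpace ℝ E] [FiniteDimensional ℝ E] [MeasurableSpace E] [BorelSpace E]
    {x y : E} (hxy : ‖x‖ = ‖y‖) (r s : ℝ) :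
    volume (ball x r ∩ ball 0 s) = volume (ball y r ∩ ball 0 s) := by
  set T := Submodule.reflection (ℝ ∙ (x - y))ᗮ
  have hpre : T ⁻¹' (ball y r ∩ ball 0 s) = ball x r ∩ ball 0 s := by
    ext z
    simp only [preimage_inter, mem_inter_iff, mem_preimage, mem_ball]
    rw [← Submodule.reflection_sub hxy, ← map_zero T, T.dist_map, T.dist_map, map_zero]
  rw [← hpre, T.measurePreserving.measure_preimage
    (measurableSet_ball.inter measurableSet_ball).nullMeasurableSet]

theorem eq_univ_or_ae_eq_ball_zero {E : Type*} [NormedAddCommGroup E] [NormedSpace ℝ E]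
    [Nontrivial E] [FiniteDimensional ℝ E] [MeasurableSpace E] [BorelSpace E]
    (μ : Measure E) [μ.IsAddHaarMeasure] {A : Set E}
    (hA : ∀ x y : E, ‖x‖ ≤ ‖y‖ → y ∈ A → x ∈ A) :
    A = univ ∨ ∃ R, A =ᵐ[μ] ball 0 R := by
  by_cases hbdd : BddAbove (norm '' A)
  · refine Or.inr ⟨sSup (norm '' A), ae_eq_set.2 ⟨?_, ?_⟩⟩
    · refine measure_mono_null (fun v ⟨hvA, hvR⟩ => ?_)
        (Measure.addHaar_sphere μ 0 (sSup (norm '' A)))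
      rw [mem_ball_zero_iff, not_lt] at hvR
      exact mem_sphere_zero_iff_norm.2 (le_antisymm (le_csSup hbdd ⟨v, hvA, rfl⟩) hvR)
    · convert measure_empty (μ := μ)
      refine eq_empty_iff_forall_notMem.2 fun v ⟨hvR, hvA⟩ => hvA ?_
      rw [mem_ball_zero_iff] at hvR
      have hne : (norm '' A).Nonempty := nonempty_iff_ne_empty.2 fun h => by
        rw [h, Real.sSup_empty] at hvR
        exact (norm_nonneg v).not_gt hvR
      obtain ⟨_, ⟨w, hwA, rfl⟩, hvw⟩ := exists_lt_of_lt_csSup hne hvR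
      exact hA v w hvw.le hwA
  · refine Or.inl (eq_univ_of_forall fun v => ?_)
    obtain ⟨_, ⟨w, hwA, rfl⟩, hvw⟩ := not_bddAbove_iff.1 hbdd ‖v‖
    exact hA v w hvw.le hwA

theorem measurable_of_norm_le_imp_le {E : Type*} [NormedAddCommGroup E] [NormedSpace ℝ E]
    [MeasurableSpace E] [BorelSpace E] {f : E → ℝ}
    (hf : ∀ x y : E, ‖x‖ ≤ ‖y‖ → f y ≤ f x) : Measurable f := by
  rcases subsingleton_or_nontrivial E with hE | hE
  · exact fun s _ => Subsingleton.measurableSet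
  obtain ⟨u, hu⟩ := exists_norm_eq E zero_le_one
  have hnorm : ∀ r : ℝ, ‖max r 0 • u‖ = max r 0 := fun r => by
    rw [norm_smul, hu, mul_one, Real.norm_of_nonneg (le_max_right r 0)]
  have hprofile : Antitone fun r : ℝ => f (max r 0 • u) := fun r r' hrr' =>
    hf _ _ (by rw [hnorm, hnorm]; exact max_le_max_right 0 hrr')
  have hf_eq : f = (fun r : ℝ => f (max r 0 • u)) ∘ norm := funext fun z => by
    have hz : ‖max ‖z‖ 0 • u‖ = ‖z‖ := by rw [hnorm, max_eq_left (norm_nonneg z)]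
    exact le_antisymm (hf _ _ hz.le) (hf _ _ hz.ge)
  rw [hf_eq]
  exact hprofile.measurable.comp measurable_norm

theorem lintegral_ofReal_mul_ofReal_eq_lintegral_meas_lt_inter {α : Type*} [MeasurableSpace α]
    {μ : Measure α} [SFinite μ] {f g : α → ℝ} (hf : Measurable f) (hg : Measurable g) :
    ∫⁻ z, ENNReal.ofReal (f z) * ENNReal.ofReal (g z) ∂μ =
      ∫⁻ p in Ioi 0 ×ˢ Ioi 0, μ ({z | p.1 < f z} ∩ {z | p.2 < g z}) := by
  set T : Set (α × ℝ × ℝ) := {q | q.2 ∈ Ioi 0 ×ˢ Ioi 0 ∧ q.2.1 < f q.1 ∧ q.2.2 < g q.1}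
  have hT : MeasurableSet T :=
    ((measurableSet_Ioi.prod measurableSet_Ioi).preimage measurable_snd).inter
      ((measurableSet_lt measurable_snd.fst (hf.comp measurable_fst)).inter
        (measurableSet_lt measurable_snd.snd (hg.comp measurable_fst)))
  calc ∫⁻ z, ENNReal.ofReal (f z) * ENNReal.ofReal (g z) ∂μ
      = ∫⁻ z, volume (Prod.mk z ⁻¹' T) ∂μ := lintegral_congr fun z => by
        have hslice : Prod.mk z ⁻¹' T = Ioo 0 (f z) ×ˢ Ioo 0 (g z) := by
          ext p
          simp only [T, mem_preimage, mem_ofPred_eq, mem_prod, mem_Ioi, mem_Ioo]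
          tauto
        rw [hslice, Measure.volume_eq_prod, Measure.prod_prod, Real.volume_Ioo, Real.volume_Ioo,
          sub_zero, sub_zero]
    _ = μ.prod volume T := (Measure.prod_apply hT).symm
    _ = ∫⁻ p, μ ((·, p) ⁻¹' T) := Measure.prod_apply_symm hT
    _ = ∫⁻ p in Ioi 0 ×ˢ Ioi 0, μ ({z | p.1 < f z} ∩ {z | p.2 < g z}) := by
        rw [← lintegral_indicator (measurableSet_Ioi.prod measurableSet_Ioi)]
        refine lintegral_congr fun p => ?_
        by_cases hp : p ∈ Ioi 0 ×ˢ Ioi 0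
        · rw [indicator_of_mem hp]
          congr 1
          ext z
          simp_all [T]
        · rw [indicator_of_notMem hp, ← measure_empty (μ := μ)]
          congr 1
          ext z
          simp_all [T]

namespace EuclideanSpace

theorem volume_eq_lintegral_volume_slice {m : ℕ} {S : Set (EuclideanSpace ℝ (Fin (m + 1)))}
    (hS : MeasurableSet S) :
    volume S = ∫⁻ w : Fin m → ℝ, volume {t : ℝ | WithLp.toLp 2 (Fin.cons t w) ∈ S} := by
  have hcons : MeasurePreserving
      (fun p : ℝ × (Fin m → ℝ) => WithLp.toLp 2 (Fin.cons p.1 p.2 : Fin (m + 1) → ℝ)) := by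
    convert (PiLp.volume_preserving_toLp (Fin (m + 1))).comp
      (volume_preserving_piFinSuccAbove (fun _ : Fin (m + 1) => ℝ) 0).symm using 1
    funext p
    simp only [MeasurableEquiv.piFinSuccAbove_symm_apply, Fin.insertNthEquiv_zero,
      Function.comp_apply]
    rfl
  rw [← hcons.measure_preimage hS.nullMeasurableSet, Measure.volume_eq_prod,
    Measure.prod_apply_symm (hcons.measurable hS)]
  rfl

theorem toLp_cons_mem_ball_single_iff {m : ℕ} {t a r : ℝ} (hr : 0 < r) (w : Fin m → ℝ) :
    WithLp.toLp 2 (Fin.cons t w) ∈ ball (single 0 a) r ↔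
      t ∈ ball a √(r ^ 2 - ∑ j, w j ^ 2) := by
  rw [mem_ball, mem_ball, dist_eq_norm, ← sq_lt_sq₀ (norm_nonneg _) hr.le, norm_sq_eq,
    Real.dist_eq, Real.lt_sqrt (abs_nonneg _), sq_abs, Fin.sum_univ_succ, lt_sub_iff_add_lt]
  simp [Real.norm_eq_abs, sq_abs]

theorem volume_ball_single_inter_ball_zero_le {m : ℕ} {a b r s : ℝ} (ha : 0 ≤ a) (hab : a ≤ b) :
    volume (ball (single (0 : Fin (m + 1)) b) r ∩ ball 0 s) ≤
      volume (ball (single (0 : Fin (m + 1)) a) r ∩ ball 0 s) := by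
  rcases le_or_gt r 0 with hr | hr
  · simp [ball_eq_empty.2 hr]
  rcases le_or_gt s 0 with hs | hs
  · simp [ball_eq_empty.2 hs]
  have hmeas : ∀ c : ℝ, MeasurableSet (ball (single (0 : Fin (m + 1)) c) r ∩ ball 0 s) :=
    fun c => measurableSet_ball.inter measurableSet_ball
  rw [volume_eq_lintegral_volume_slice (hmeas a), volume_eq_lintegral_volume_slice (hmeas b)]
  refine lintegral_mono fun w => ?_
  have hslice : ∀ c : ℝ,
      {t : ℝ | WithLp.toLp 2 (Fin.cons t w) ∈ ball (single 0 c) r ∩ ball 0 s} =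
        ball c √(r ^ 2 - ∑ j, w j ^ 2) ∩ ball 0 √(s ^ 2 - ∑ j, w j ^ 2) := fun c => by
    ext t
    have h0 : single (0 : Fin (m + 1)) (0 : ℝ) = 0 := by simp
    rw [mem_ofPred_eq, mem_inter_iff, mem_inter_iff, toLp_cons_mem_ball_single_iff hr, ← h0,
      toLp_cons_mem_ball_single_iff hs]
  rw [hslice, hslice]
  exact Real.volume_ball_inter_ball_zero_le ha hab

theorem volume_ball_inter_ball_zero_le_of_norm_le {n : ℕ} {x y : EuclideanSpace ℝ (Fin n)}
    (hxy : ‖x‖ ≤ ‖y‖) (r s : ℝ) :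
    volume (ball y r ∩ ball 0 s) ≤ volume (ball x r ∩ ball 0 s) := by
  obtain _ | m := n
  · rw [Subsingleton.elim x y]
  · have hrotate : ∀ z : EuclideanSpace ℝ (Fin (m + 1)), volume (ball z r ∩ ball 0 s) =
        volume (ball (single (0 : Fin (m + 1)) ‖z‖) r ∩ ball 0 s) := fun z =>
      volume_ball_inter_ball_zero_eq_of_norm_eq (by simp) r s
    rw [hrotate x, hrotate y]
    exact volume_ball_single_inter_ball_zero_le (norm_nonneg x) hxy

theorem volume_preimage_sub_inter_le {n : ℕ} {A B : Set (EuclideanSpace ℝ (Fin n))}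
    (hA : ∀ x y : EuclideanSpace ℝ (Fin n), ‖x‖ ≤ ‖y‖ → y ∈ A → x ∈ A)
    (hB : ∀ x y : EuclideanSpace ℝ (Fin n), ‖x‖ ≤ ‖y‖ → y ∈ B → x ∈ B)
    {x y : EuclideanSpace ℝ (Fin n)} (hxy : ‖x‖ ≤ ‖y‖) :
    volume ((y - ·) ⁻¹' A ∩ B) ≤ volume ((x - ·) ⁻¹' A ∩ B) := by
  rcases subsingleton_or_nontrivial (EuclideanSpace ℝ (Fin n)) with _ | _
  · rw [Subsingleton.elim x y]
  rcases eq_univ_or_ae_eq_ball_zero volume hA with rfl | ⟨RA, hRA⟩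
  · simp only [preimage_univ, univ_inter, le_refl]
  rcases eq_univ_or_ae_eq_ball_zero volume hB with rfl | ⟨RB, hRB⟩
  · have hsub : ∀ c : EuclideanSpace ℝ (Fin n), volume ((c - ·) ⁻¹' A) = volume A := fun c => by
      simp_rw [sub_eq_add_neg]
      rw [show (fun z => c + -z) = (c + ·) ∘ Neg.neg from rfl, preimage_comp,
        Measure.measure_preimage_neg, measure_preimage_add]
    rw [inter_univ, inter_univ, hsub, hsub]
  have hball : ∀ c : EuclideanSpace ℝ (Fin n),
      volume ((c - ·) ⁻¹' A ∩ B) = volume (ball c RA ∩ ball 0 RB) := fun c => by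
    have hpre : (c - ·) ⁻¹' ball 0 RA = ball c RA := by
      ext z
      simp [dist_eq_norm, norm_sub_rev]
    rw [← hpre]
    exact measure_congr <| .inter
      ((Measure.measurePreserving_sub_left volume c).quasiMeasurePreserving.preimage_ae_eq hRA) hRB
  rw [hball, hball]
  exact volume_ball_inter_ball_zero_le_of_norm_le hxy RA RB

end EuclideanSpace

theorem radial_decreasing_convolution_general (n : ℕ)
    (f g : EuclideanSpace ℝ (Fin n) → ℝ)
    (hg1 : Integrable g (volume : Measure (EuclideanSpace ℝ (Fin n))))
    (hf0 : ∀ x, 0 ≤ f x) (hg0 : ∀ x, 0 ≤ g x)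
    (hfmono : ∀ x y : EuclideanSpace ℝ (Fin n), ‖x‖ ≤ ‖y‖ → f y ≤ f x)
    (hgmono : ∀ x y : EuclideanSpace ℝ (Fin n), ‖x‖ ≤ ‖y‖ → g y ≤ g x) :
    ∀ x y : EuclideanSpace ℝ (Fin n), ‖x‖ ≤ ‖y‖ →
      (∫ z : EuclideanSpace ℝ (Fin n), f (y - z) * g z) ≤
        ∫ z : EuclideanSpace ℝ (Fin n), f (x - z) * g z := by
  intro x y hxy
  have hgm := measurable_of_norm_le_imp_le hgmono
  have hfm : ∀ c, Measurable fun z => f (c - z) := fun c =>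
    (measurable_of_norm_le_imp_le hfmono).comp (measurable_const.sub measurable_id)
  have hint : Integrable fun z => f (x - z) * g z :=
    hg1.bdd_mul (hfm x).aestronglyMeasurable <| ae_of_all _ fun z => by
      rw [Real.norm_of_nonneg (hf0 _)]
      exact hfmono 0 _ (by simp)
  have hprod_nonneg : ∀ c, 0 ≤ᵐ[volume] fun z => f (c - z) * g z :=
    fun c => ae_of_all _ fun z => mul_nonneg (hf0 _) (hg0 _)
  rw [integral_eq_lintegral_of_nonneg_ae (hprod_nonneg y) ((hfm y).mul hgm).aestronglyMeasurable,
    integral_eq_lintegral_of_nonneg_ae (hprod_nonneg x) ((hfm x).mul hgm).aestronglyMeasurable]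
  refine ENNReal.toReal_mono hint.lintegral_lt_top.ne ?_
  simp_rw [ENNReal.ofReal_mul (hf0 _)]
  rw [lintegral_ofReal_mul_ofReal_eq_lintegral_meas_lt_inter (hfm y) hgm,
    lintegral_ofReal_mul_ofReal_eq_lintegral_meas_lt_inter (hfm x) hgm]
  exact lintegral_mono fun p =>
    EuclideanSpace.volume_preimage_sub_inter_le (A := {w | p.1 < f w}) (B := {w | p.2 < g w})
      (fun _ _ huv hv => hv.trans_le (hfmono _ _ huv))
      (fun _ _ huv hv => hv.trans_le (hgmono _ _ huv)) hxy

/-- If `f, g ∈ L¹(ℝⁿ)` are radially symmetric, nonnegative and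
nonincreasing in `r = |x|`, then so is the convolution `f ∗ g`. (Radial symmetry together
with monotonicity in the radius is encoded as: `‖x‖ ≤ ‖y‖` implies the value at `y` is at
most the value at `x`.) -/
theorem radial_decreasing_convolution (n : ℕ) (hn : 1 ≤ n)
    (f g : EuclideanSpace ℝ (Fin n) → ℝ)
    (hf1 : Integrable f (volume : Measure (EuclideanSpace ℝ (Fin n))))
    (hg1 : Integrable g (volume : Measure (EuclideanSpace ℝ (Fin n))))
    (hf0 : ∀ x, 0 ≤ f x) (hg0 : ∀ x, 0 ≤ g x)
    (hfmono : ∀ x y : EuclideanSpace ℝ (Fin n), ‖x‖ ≤ ‖y‖ → f y ≤ f x)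
    (hgmono : ∀ x y : EuclideanSpace ℝ (Fin n), ‖x‖ ≤ ‖y‖ → g y ≤ g x) :
    ∀ x y : EuclideanSpace ℝ (Fin n), ‖x‖ ≤ ‖y‖ →
      (∫ z : EuclideanSpace ℝ (Fin n), f (y - z) * g z) ≤
        ∫ z : EuclideanSpace ℝ (Fin n), f (x - z) * g z :=
  radial_decreasing_convolution_general n f g hg1 hf0 hg0 hfmono hgmono
end
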